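/- arXiv:2005.09745 — 2 statements merged into one kernel-verified Lean document; each statement's English description precedes it below -/
import Mathlib

section
/- Let x > 0, p > 0, and C ≥ 0 be real numbers, and let y : ℝ → ℝ be a measurable function satisfying 0 ≤ y(t) ≤ p for all t, y(t) = 0 for t ∉ [0, C], and ∫ y(t) dt = x. Then ∫ (t/x)·y(t) dt + x/(2p) ≤ C. -/
/-!
Bathtub principle: with `s = C - x / p` and `g = p · 𝟙[s, C]` (all the work done at full rate
as late as possible), `(t - s) (g t - y t) ≥ 0` for every `t`, because `y ≤ p` on `[s, C]`,
`y ≥ 0` before `s` and `y = 0` after `C`. Integrating gives `∫ t y ≤ s x + ∫ (t - s) g`,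
which is `C x - x² / (2p)`.
-/

open MeasureTheory Set Function

theorem integrable_mul_of_support_subset_Icc {f y : ℝ → ℝ} {a b : ℝ} (hf : Continuous f)
    (hy : IntegrableOn y (Icc a b)) (hsupp : support y ⊆ Icc a b) :
    Integrable fun t => f t * y t :=
  (integrableOn_iff_integrable_of_support_subset
    ((support_mul_subset_right f y).trans hsupp)).1
    (hy.continuousOn_mul hf.continuousOn isCompact_Icc)

noncomputable def fullRateUntil (p s C : ℝ) : ℝ → ℝ := (Icc s C).indicator fun _ => p

theorem integral_sub_mul_fullRateUntil {p s C : ℝ} (hsC : s ≤ C) :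
    ∫ t, (t - s) * fullRateUntil p s C t = p * (C - s) ^ 2 / 2 := by
  have : (fun t => (t - s) * fullRateUntil p s C t)
      = (Icc s C).indicator fun t => (t - s) * p := by
    ext t; by_cases ht : t ∈ Icc s C <;> simp [fullRateUntil, ht]
  rw [this, integral_indicator measurableSet_Icc, integral_Icc_eq_integral_Ioc,
    ← intervalIntegral.integral_of_le hsC, intervalIntegral.integral_mul_const,
    intervalIntegral.integral_comp_sub_right (fun t => t), sub_self, integral_id]
  ring

theorem sub_mul_fullRateUntil_sub_nonneg {p s C t v : ℝ} (h0 : 0 ≤ v) (hle : v ≤ p)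
    (hC : C < t → v = 0) : 0 ≤ (t - s) * (fullRateUntil p s C t - v) := by
  by_cases ht : t ∈ Icc s C
  · simp only [fullRateUntil, indicator_of_mem ht]
    exact mul_nonneg (sub_nonneg.2 ht.1) (sub_nonneg.2 hle)
  · simp only [fullRateUntil, indicator_of_notMem ht, zero_sub]
    rcases lt_or_ge t s with hts | hst
    · exact mul_nonneg_of_nonpos_of_nonpos (by linarith) (by linarith)
    · simp [hC (lt_of_not_ge fun htC => ht ⟨hst, htC⟩)]

theorem integral_mul_le_of_support_subset_Icc {y : ℝ → ℝ} {a C p : ℝ} (hp : 0 < p)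
    (hy : Measurable y) (h0 : ∀ t, 0 ≤ y t) (hle : ∀ t, y t ≤ p) (hsupp : support y ⊆ Icc a C) :
    ∫ t, t * y t ≤ C * (∫ t, y t) - (∫ t, y t) ^ 2 / (2 * p) := by
  set x := ∫ t, y t
  set s := C - x / p
  have hsC : s ≤ C := sub_le_self C (div_nonneg (integral_nonneg h0) hp.le)
  have hyOn : IntegrableOn y (Icc a C) :=
    Measure.integrableOn_of_bounded (M := p) (by simp [Real.volume_Icc])
      hy.aestronglyMeasurable
      (ae_of_all _ fun t => by rw [Real.norm_of_nonneg (h0 t)]; exact hle t)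
  have hyI : Integrable y := (integrableOn_iff_integrable_of_support_subset hsupp).1 hyOn
  have htyI : Integrable fun t => t * y t :=
    integrable_mul_of_support_subset_Icc continuous_id hyOn hsupp
  have hgI : Integrable fun t => (t - s) * fullRateUntil p s C t :=
    integrable_mul_of_support_subset_Icc (continuous_id.sub continuous_const)
      ((integrableOn_const (C := p) measure_Icc_lt_top.ne).indicator measurableSet_Icc)
      support_indicator_subset
  have hpt : ∀ t, 0 ≤ (t - s) * (fullRateUntil p s C t - y t) := fun t =>
    sub_mul_fullRateUntil_sub_nonneg (h0 t) (hle t) fun htC =>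
      notMem_support.1 fun hts => htC.not_ge (hsupp hts).2
  have hexpand : ∫ t, (t - s) * (fullRateUntil p s C t - y t)
      = (∫ t, (t - s) * fullRateUntil p s C t) - ((∫ t, t * y t) - s * x) := by
    have : (fun t => (t - s) * (fullRateUntil p s C t - y t))
        = fun t => (t - s) * fullRateUntil p s C t - (t * y t - s * y t) := by
      ext t; ring
    rw [this, integral_sub hgI (htyI.sub (hyI.const_mul s) : Integrable fun t => t * y t - s * y t),
      integral_sub htyI (hyI.const_mul s), integral_const_mul]
  have hnonneg : 0 ≤ ∫ t, (t - s) * (fullRateUntil p s C t - y t) := integral_nonneg hpt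
  rw [hexpand, integral_sub_mul_fullRateUntil hsC] at hnonneg
  have hextremal : s * x + p * (C - s) ^ 2 / 2 = C * x - x ^ 2 / (2 * p) := by
    simp only [s]; field_simp; ring
  linarith

theorem lp_contribution_le_completion_time_general
    (x p C : ℝ) (hx : 0 < x) (hp : 0 < p)
    (y : ℝ → ℝ) (hmeas : Measurable y)
    (hnn : ∀ t, 0 ≤ y t) (hub : ∀ t, y t ≤ p)
    (hsupp : ∀ t, t ∉ Set.Icc (0 : ℝ) C → y t = 0)
    (hwork : ∫ t, y t = x) :
    (∫ t, (t / x) * y t) + x / (2 * p) ≤ C := by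
  have hmoment := integral_mul_le_of_support_subset_Icc hp hmeas hnn hub
    (support_subset_iff'.2 hsupp)
  rw [hwork] at hmoment
  have hdiv : ∫ t, (t / x) * y t = (∫ t, t * y t) / x := by
    simp_rw [div_mul_eq_mul_div]
    exact integral_div x _
  have hbound : (∫ t, t * y t) / x ≤ C - x / (2 * p) := by
    rw [div_le_iff₀ hx]
    calc ∫ t, t * y t ≤ C * x - x ^ 2 / (2 * p) := hmoment
      _ = (C - x / (2 * p)) * x := by ring
  linarith

/-- Why the LP relaxation of Appendix A lower-bounds response time: if a job of size `x`
is processed at measurable rate `y t ∈ [0, p]`, with `y` supported in `[0, C]` and total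
work `∫ y = x`, then its LP objective contribution `∫ (t/x)·y t dt + x/(2p)` is at most
its completion time `C`. -/
theorem lp_contribution_le_completion_time
    (x p C : ℝ) (hx : 0 < x) (hp : 0 < p) (hC : 0 ≤ C)
    (y : ℝ → ℝ) (hmeas : Measurable y)
    (hnn : ∀ t, 0 ≤ y t) (hub : ∀ t, y t ≤ p)
    (hsupp : ∀ t, t ∉ Set.Icc (0 : ℝ) C → y t = 0)
    (hwork : ∫ t, y t = x) :
    (∫ t, (t / x) * y t) + x / (2 * p) ≤ C :=
  lp_contribution_le_completion_time_general x p C hx hp y hmeas hnn hub hsupp hwork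
end

section
/- Let J be a finite set and x : J → ℝ with x_{j'} > 0 for all j' ∈ J. Fix j ∈ J, a real t ≥ 0, reals k > 0 and κ > 0, and set s = 2. Let S ⊆ J be a set with x_{j'} ≤ x_j for every j' ∈ S, and let Q ⊆ J. Suppose ∑_{j' ∈ S \ Q} x_{j'} ≤ k·s·t. Define α = (∑_{j' ∈ S} x_{j'})/(k·s) + x_j/(s·κ) and β = |Q|/s. Then α/x_j − β/k ≤ t/x_j + 1/(2κ). -/
open Finset

theorem Finset.sum_le_sum_sdiff_add_card_nsmul {ι M : Type*} [DecidableEq ι]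
    [AddCommMonoid M] [PartialOrder M] [IsOrderedAddMonoid M]
    {S : Finset ι} (Q : Finset ι) {f : ι → M} {b : M} (hb : 0 ≤ b) (hf : ∀ i ∈ S, f i ≤ b) :
    ∑ i ∈ S, f i ≤ ∑ i ∈ S \ Q, f i + #Q • b := by
  have hinter : ∑ i ∈ S ∩ Q, f i ≤ #Q • b :=
    calc ∑ i ∈ S ∩ Q, f i ≤ #(S ∩ Q) • b :=
          sum_le_card_nsmul _ _ _ fun i hi => hf i (mem_inter.1 hi).1
      _ ≤ #Q • b := nsmul_le_nsmul_left hb (card_le_card inter_subset_right)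
  rw [← sum_inter_add_sum_sdiff S Q f, add_comm]
  exact add_le_add le_rfl hinter

theorem dual_constraint_of_work_bound {a c x k κ t : ℝ} (hx : 0 < x) (hk : 0 < k)
    (hwork : a - c * x ≤ k * 2 * t) :
    (a / (k * 2) + x / (2 * κ)) / x - (c / 2) / k ≤ t / x + 1 / (2 * κ) := by
  have hrewrite : (a / (k * 2) + x / (2 * κ)) / x - (c / 2) / k
      = (a - c * x) / (k * 2 * x) + 1 / (2 * κ) := by
    field_simp
    ring
  have htime : k * 2 * t / (k * 2 * x) = t / x := by
    field_simp
  rw [hrewrite, ← htime]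
  gcongr

theorem srpt_dual_feasibility_general
    (J : Type) [DecidableEq J]
    (x : J → ℝ) (hx : ∀ j', 0 < x j')
    (j : J) (t : ℝ)
    (k κ s : ℝ) (hk : 0 < k) (hs : s = 2)
    (S Q : Finset J)
    (hS : ∀ j' ∈ S, x j' ≤ x j)
    (hwork : ∑ j' ∈ S \ Q, x j' ≤ k * s * t) :
    ((∑ j' ∈ S, x j') / (k * s) + x j / (s * κ)) / x j - ((Q.card : ℝ) / s) / k
      ≤ t / x j + 1 / (2 * κ) := by
  subst hs
  have hwork_ahead : ∑ j' ∈ S, x j' ≤ ∑ j' ∈ S \ Q, x j' + Q.card * x j := by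
    simpa only [nsmul_eq_mul] using sum_le_sum_sdiff_add_card_nsmul Q (hx j).le hS
  exact dual_constraint_of_work_bound (hx j) hk (by linarith)

/-- Core of Lemma `lem:feasible` (dual feasibility at speed `s = 2`) in Appendix A:
with `S` the set of jobs no larger than job `j`, `Q` the set of jobs unfinished at time
`t`, and the completed-work bound `∑_{j' ∈ S \ Q} x_{j'} ≤ k·s·t`, the dual variables
`α = (∑_{j'∈S} x_{j'})/(ks) + x_j/(sκ)` and `β = |Q|/s` satisfy the dual constraint. -/
theorem srpt_dual_feasibility
    (J : Type) [Fintype J] [DecidableEq J]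
    (x : J → ℝ) (hx : ∀ j', 0 < x j')
    (j : J) (t : ℝ) (ht : 0 ≤ t)
    (k κ s : ℝ) (hk : 0 < k) (hκ : 0 < κ) (hs : s = 2)
    (S Q : Finset J)
    (hS : ∀ j' ∈ S, x j' ≤ x j)
    (hwork : ∑ j' ∈ S \ Q, x j' ≤ k * s * t) :
    ((∑ j' ∈ S, x j') / (k * s) + x j / (s * κ)) / x j - ((Q.card : ℝ) / s) / k
      ≤ t / x j + 1 / (2 * κ) :=
  srpt_dual_feasibility_general J x hx j t k κ s hk hs S Q hS hwork
end
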